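/- arXiv:2305.18114 — 5 statements merged into one kernel-verified Lean document; each statement's English description precedes it below -/
import Mathlib

section
/- Let FS₁ > 0, and suppose FS₁·Δ = RF₂ + S⁻ - S⁺ where S⁻ = Σ over negatively-entering groups g of P(g)·Δ(g) and S⁺ = Σ over positively-entering groups g of P(g)·Δ(g), with each Δ(g) ∈ [L, U] for reals L ≤ 0 ≤ U, Σ_neg P(g) ≤ q₀, and Σ_pos P(g) ≤ q₁ for nonnegative q₀, q₁. Then RF₂/FS₁ + q₀·L/FS₁ - q₁·U/FS₁ ≤ Δ ≤ RF₂/FS₁ + q₀·U/FS₁ - q₁·L/FS₁. -/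
/-!
Each contaminating term is a sum of weights times effects in `[L, U]`. Since `L ≤ 0 ≤ U`,
shrinking each effect to `L` (resp. raising it to `U`) and enlarging the total weight to its
bound `q` only moves the sum down (resp. up), so `S⁻, S⁺ ∈ [q L, q U]` with `q = q₀, q₁`.
Dividing the identity `FS₁ Δ = RF₂ + S⁻ - S⁺` by `FS₁ > 0` gives the bounds.
-/

open Finset

section WeightedSum

variable {ι R : Type*} [CommRing R] [LinearOrder R] [IsStrictOrderedRing R]
  {s : Finset ι} {w x : ι → R} {q : R}

theorem mul_le_sum_mul_of_sum_le {L : R} (hL : L ≤ 0) (hw : ∀ i ∈ s, 0 ≤ w i)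
    (hx : ∀ i ∈ s, L ≤ x i) (hq : ∑ i ∈ s, w i ≤ q) : q * L ≤ ∑ i ∈ s, w i * x i :=
  calc q * L ≤ (∑ i ∈ s, w i) * L := mul_le_mul_of_nonpos_right hq hL
    _ = ∑ i ∈ s, w i * L := sum_mul ..
    _ ≤ ∑ i ∈ s, w i * x i :=
      sum_le_sum fun i hi => mul_le_mul_of_nonneg_left (hx i hi) (hw i hi)

theorem sum_mul_le_mul_of_sum_le {U : R} (hU : 0 ≤ U) (hw : ∀ i ∈ s, 0 ≤ w i)
    (hx : ∀ i ∈ s, x i ≤ U) (hq : ∑ i ∈ s, w i ≤ q) : ∑ i ∈ s, w i * x i ≤ q * U :=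
  calc ∑ i ∈ s, w i * x i ≤ ∑ i ∈ s, w i * U :=
      sum_le_sum fun i hi => mul_le_mul_of_nonneg_left (hx i hi) (hw i hi)
    _ = (∑ i ∈ s, w i) * U := (sum_mul ..).symm
    _ ≤ q * U := mul_le_mul_of_nonneg_right hq hU

end WeightedSum

theorem stmt_5_general {n m : ℕ} (FS1 RF2 Δ L U q0 q1 : ℝ)
    (P Δneg : Fin n → ℝ) (Q Δpos : Fin m → ℝ)
    (hFS1 : 0 < FS1) (hL : L ≤ 0) (hU : 0 ≤ U)
    (hPnn : ∀ i, 0 ≤ P i) (hQnn : ∀ j, 0 ≤ Q j)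
    (hΔnegL : ∀ i, L ≤ Δneg i) (hΔnegU : ∀ i, Δneg i ≤ U)
    (hΔposL : ∀ j, L ≤ Δpos j) (hΔposU : ∀ j, Δpos j ≤ U)
    (hsumP : ∑ i, P i ≤ q0) (hsumQ : ∑ j, Q j ≤ q1)
    (hid : FS1 * Δ = RF2 + ∑ i, P i * Δneg i - ∑ j, Q j * Δpos j) :
    RF2 / FS1 + q0 * L / FS1 - q1 * U / FS1 ≤ Δ ∧
    Δ ≤ RF2 / FS1 + q0 * U / FS1 - q1 * L / FS1 := by
  have hneg_lo := mul_le_sum_mul_of_sum_le hL (fun i _ => hPnn i) (fun i _ => hΔnegL i) hsumP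
  have hneg_hi := sum_mul_le_mul_of_sum_le hU (fun i _ => hPnn i) (fun i _ => hΔnegU i) hsumP
  have hpos_lo := mul_le_sum_mul_of_sum_le hL (fun j _ => hQnn j) (fun j _ => hΔposL j) hsumQ
  have hpos_hi := sum_mul_le_mul_of_sum_le hU (fun j _ => hQnn j) (fun j _ => hΔposU j) hsumQ
  rw [← add_div, ← sub_div, ← add_div, ← sub_div, div_le_iff₀ hFS1, le_div_iff₀ hFS1,
    mul_comm Δ, hid]
  constructor <;> linarith

theorem stmt_5 {n m : ℕ} (FS1 RF2 Δ L U q0 q1 : ℝ)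
    (P Δneg : Fin n → ℝ) (Q Δpos : Fin m → ℝ)
    (hFS1 : 0 < FS1) (hL : L ≤ 0) (hU : 0 ≤ U)
    (hPnn : ∀ i, 0 ≤ P i) (hQnn : ∀ j, 0 ≤ Q j)
    (hΔnegL : ∀ i, L ≤ Δneg i) (hΔnegU : ∀ i, Δneg i ≤ U)
    (hΔposL : ∀ j, L ≤ Δpos j) (hΔposU : ∀ j, Δpos j ≤ U)
    (hq0 : 0 ≤ q0) (hq1 : 0 ≤ q1)
    (hsumP : ∑ i, P i ≤ q0) (hsumQ : ∑ j, Q j ≤ q1)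
    (hid : FS1 * Δ = RF2 + ∑ i, P i * Δneg i - ∑ j, Q j * Δpos j) :
    RF2 / FS1 + q0 * L / FS1 - q1 * U / FS1 ≤ Δ ∧
    Δ ≤ RF2 / FS1 + q0 * U / FS1 - q1 * L / FS1 :=
  stmt_5_general FS1 RF2 Δ L U q0 q1 P Δneg Q Δpos hFS1 hL hU hPnn hQnn hΔnegL hΔnegU hΔposL hΔposU
    hsumP hsumQ hid
end

section
/- Let T ≥ 1, FS : Fin T → ℝ with FS 0 ≠ 0, and define ρ_k = FS_{k-1} - FS_k for k = 2,…,T. Suppose RF : Fin T → ℝ and Δ : Fin T → ℝ satisfy RF_t = FS₁·Δ^{t-1} - Σ_{k=2}^{t} ρ_k·Δ^{t-k} for each t = 1,…,T (with the empty sum convention for t=1). Then Δ = P⁻¹·RF where P is the lower-triangular matrix with diagonal FS₁ and entry (t, t-k+1) equal to -ρ_k; in particular Δ is uniquely determined by RF and FS. -/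
/-!
Row `s` of `P *ᵥ Δ` is the diagonal term `FS₁ Δˢ` plus the strictly lower terms `-ρ Δʲ`, so the
system says exactly `P *ᵥ Δ = RF`. Since `P` is lower triangular, `det P` is the product of its
diagonal, `FS₁ ^ T ≠ 0`, and `P` can be inverted.
-/

open Finset
open scoped Matrix

namespace Matrix

variable {n R : Type*} [Fintype n] [LinearOrder n]

theorem IsLowerTriangular.mulVec_apply [NonUnitalNonAssocSemiring R] {M : Matrix n n R}
    (hM : M.IsLowerTriangular) (v : n → R) (i : n) :
    (M *ᵥ v) i = M i i * v i + ∑ j ∈ univ.filter (· < i), M i j * v j := by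
  rw [mulVec, dotProduct, ← add_sum_erase _ _ (mem_univ i), ← sum_filter_add_sum_filter_not
    (univ.erase i) (· < i)]
  have h_above : ∑ j ∈ (univ.erase i).filter (¬ · < i), M i j * v j = 0 :=
    sum_eq_zero fun j hj => by
      obtain ⟨hji, hij⟩ : j ≠ i ∧ ¬ j < i := by simpa using hj
      rw [hM (show i < j from lt_of_le_of_ne (not_lt.1 hij) hji.symm), zero_mul]
  have h_below : (univ.erase i).filter (· < i) = univ.filter (· < i) := by
    ext j; simpa using ne_of_lt
  rw [h_above, h_below, add_zero]

theorem IsLowerTriangular.isUnit_det [CommRing R] {M : Matrix n n R} (hM : M.IsLowerTriangular)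
    (hd : ∀ i, IsUnit (M i i)) : IsUnit M.det := by
  rw [det_of_isLowerTriangular M hM]
  exact IsUnit.prod_univ_iff.2 hd

theorem IsLowerTriangular.eq_inv_mulVec_of_mulVec_eq [CommRing R] {M : Matrix n n R}
    (hM : M.IsLowerTriangular) (hd : ∀ i, IsUnit (M i i)) {x y : n → R} (h : M *ᵥ x = y) :
    x = M⁻¹ *ᵥ y := by
  rw [← h, mulVec_mulVec, nonsing_inv_mul M (hM.isUnit_det hd), one_mulVec]

end Matrix

theorem stmt_9 (T : ℕ) (hT : 1 ≤ T) (FS RF Δ : Fin T → ℝ)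
    (hFS : FS ⟨0, hT⟩ ≠ 0)
    (P : Matrix (Fin T) (Fin T) ℝ)
    (hP : ∀ i j : Fin T, P i j =
      if i = j then FS ⟨0, hT⟩
      else if j < i then
        -(FS ⟨(i : ℕ) - j - 1, Nat.lt_of_le_of_lt (by omega) i.isLt⟩ -
          FS ⟨(i : ℕ) - j, Nat.lt_of_le_of_lt (Nat.sub_le _ _) i.isLt⟩)
      else 0)
    (hsys : ∀ s : Fin T, RF s = FS ⟨0, hT⟩ * Δ s -
      ∑ j ∈ Finset.univ.filter (fun j : Fin T => j < s),
        (FS ⟨(s : ℕ) - j - 1, Nat.lt_of_le_of_lt (by omega) s.isLt⟩ -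
         FS ⟨(s : ℕ) - j, Nat.lt_of_le_of_lt (Nat.sub_le _ _) s.isLt⟩) * Δ j) :
    Δ = P⁻¹.mulVec RF := by
  have hLT : P.IsLowerTriangular := fun i j (hij : i < j) => by
    rw [hP, if_neg hij.ne, if_neg (not_lt.2 hij.le)]
  have hdiag : ∀ i, P i i = FS ⟨0, hT⟩ := fun i => by rw [hP, if_pos rfl]
  have hmv : P *ᵥ Δ = RF := funext fun s => by
    rw [hLT.mulVec_apply, hsys s, hdiag, sub_eq_add_neg, ← sum_neg_distrib]
    congr 1
    refine sum_congr rfl fun j hj => ?_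
    have hjs : j < s := (mem_filter.1 hj).2
    rw [hP, if_neg hjs.ne', if_pos hjs, neg_mul]
  exact hLT.eq_inv_mulVec_of_mulVec_eq (fun i => (hdiag i).symm ▸ hFS.isUnit) hmv
end

section
/- Let FS : ℕ → ℝ with FS 1 > 0, L ≤ 0 ≤ U, and for fixed t ≥ 2 suppose FS₁·Δ = RF_t + Σ_{k=2}^t ρ_k·δ_k where ρ_k = FS_{k-1} - FS_k and each δ_k ∈ [L, U]. Then Δ ≥ RF_t/FS₁ + L·(FS₁ - FS_t)/FS₁ + (U - L)·Σ_{k=2}^t [FS_{k-1} < FS_k]·(FS_{k-1} - FS_k)/FS₁, and Δ ≤ RF_t/FS₁ + U·(FS₁ - FS_t)/FS₁ + (L - U)·Σ_{k=2}^t [FS_{k-1} < FS_k]·(FS_{k-1} - FS_k)/FS₁, where [·] is the indicator. -/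
/-!
Each weight `ρ_k = FS (k - 1) - FS k` times `δ_k ∈ [L, U]` is at least `ρ_k L` when `ρ_k ≥ 0`
and at least `ρ_k U = ρ_k L + (U - L) ρ_k` when `ρ_k < 0`. Summing, the `L`-part telescopes to
`L (FS 1 - FS t)`, and dividing the identity for `FS 1 * Δ` by `FS 1 > 0` gives the lower bound.
The upper bound is the lower bound for `-Δ`, i.e. for `-δ_k ∈ [-U, -L]`.
-/

open Finset

theorem sum_Icc_two_sub_telescope {M : Type*} [AddCommGroup M] (f : ℕ → M) {t : ℕ}
    (ht : 1 ≤ t) : ∑ k ∈ Icc 2 t, (f (k - 1) - f k) = f 1 - f t := by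
  induction t, ht using Nat.le_induction with
  | base => simp
  | succ n hn ih =>
    rw [sum_Icc_succ_top (by omega), ih, Nat.add_sub_cancel]
    abel

theorem add_sub_mul_ite_le_sub_mul {R : Type*} [CommRing R] [LinearOrder R]
    [IsStrictOrderedRing R] {L U δ : R} (hL : L ≤ δ) (hU : δ ≤ U) (a b : R) :
    L * (a - b) + (U - L) * (if a < b then a - b else 0) ≤ (a - b) * δ := by
  split_ifs with hab
  · nlinarith
  · nlinarith

section Field

variable {R : Type*} [Field R] [LinearOrder R] [IsStrictOrderedRing R]

theorem sum_sub_mul_ge_of_bounds (FS δ : ℕ → R) {L U : R} {t : ℕ} (ht : 1 ≤ t)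
    (hδ : ∀ k ∈ Icc 2 t, L ≤ δ k ∧ δ k ≤ U) :
    L * (FS 1 - FS t) + (U - L) * ∑ k ∈ Icc 2 t,
        (if FS (k - 1) < FS k then FS (k - 1) - FS k else 0) ≤
      ∑ k ∈ Icc 2 t, (FS (k - 1) - FS k) * δ k := by
  rw [← sum_Icc_two_sub_telescope FS ht, mul_sum, mul_sum, ← sum_add_distrib]
  exact sum_le_sum fun k hk ↦ add_sub_mul_ite_le_sub_mul (hδ k hk).1 (hδ k hk).2 _ _

theorem le_of_mul_eq_add_sum_sub_mul {FS δ : ℕ → R} (hFS1 : 0 < FS 1) {L U : R} {t : ℕ}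
    (ht : 1 ≤ t) (hδ : ∀ k ∈ Icc 2 t, L ≤ δ k ∧ δ k ≤ U) {RFt Δ : R}
    (hid : FS 1 * Δ = RFt + ∑ k ∈ Icc 2 t, (FS (k - 1) - FS k) * δ k) :
    RFt / FS 1 + L * (FS 1 - FS t) / FS 1 +
      (U - L) * ∑ k ∈ Icc 2 t,
        (if FS (k - 1) < FS k then FS (k - 1) - FS k else 0) / FS 1 ≤ Δ := by
  rw [← sum_div]
  calc _ = (RFt + (L * (FS 1 - FS t) + (U - L) * ∑ k ∈ Icc 2 t,
          (if FS (k - 1) < FS k then FS (k - 1) - FS k else 0))) / FS 1 := by ring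
    _ ≤ (RFt + ∑ k ∈ Icc 2 t, (FS (k - 1) - FS k) * δ k) / FS 1 := by
      gcongr
      exact sum_sub_mul_ge_of_bounds FS δ ht hδ
    _ = Δ := by rw [← hid, mul_div_cancel_left₀ _ hFS1.ne']

end Field

theorem stmt_11_general (FS : ℕ → ℝ) (hFS1 : 0 < FS 1) (L U : ℝ)
    (t : ℕ) (ht : 2 ≤ t) (δ : ℕ → ℝ) (RFt Δ : ℝ)
    (hδ : ∀ k ∈ Finset.Icc 2 t, L ≤ δ k ∧ δ k ≤ U)
    (hid : FS 1 * Δ = RFt + ∑ k ∈ Finset.Icc 2 t, (FS (k - 1) - FS k) * δ k) :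
    (RFt / FS 1 + L * (FS 1 - FS t) / FS 1 +
      (U - L) * ∑ k ∈ Finset.Icc 2 t,
        (if FS (k - 1) < FS k then FS (k - 1) - FS k else 0) / FS 1 ≤ Δ) ∧
    (Δ ≤ RFt / FS 1 + U * (FS 1 - FS t) / FS 1 +
      (L - U) * ∑ k ∈ Finset.Icc 2 t,
        (if FS (k - 1) < FS k then FS (k - 1) - FS k else 0) / FS 1) := by
  refine ⟨le_of_mul_eq_add_sum_sub_mul hFS1 (by omega) hδ hid, ?_⟩
  have hδ_neg : ∀ k ∈ Icc 2 t, -U ≤ -δ k ∧ -δ k ≤ -L :=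
    fun k hk ↦ ⟨neg_le_neg (hδ k hk).2, neg_le_neg (hδ k hk).1⟩
  have hid_neg : FS 1 * -Δ = -RFt + ∑ k ∈ Icc 2 t, (FS (k - 1) - FS k) * -δ k := by
    simp only [mul_neg, sum_neg_distrib, hid, neg_add]
  linear_combination le_of_mul_eq_add_sum_sub_mul hFS1 (by omega) hδ_neg hid_neg

theorem stmt_11 (FS : ℕ → ℝ) (hFS1 : 0 < FS 1) (L U : ℝ) (hL : L ≤ 0) (hU : 0 ≤ U)
    (t : ℕ) (ht : 2 ≤ t) (δ : ℕ → ℝ) (RFt Δ : ℝ)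
    (hδ : ∀ k ∈ Finset.Icc 2 t, L ≤ δ k ∧ δ k ≤ U)
    (hid : FS 1 * Δ = RFt + ∑ k ∈ Finset.Icc 2 t, (FS (k - 1) - FS k) * δ k) :
    (RFt / FS 1 + L * (FS 1 - FS t) / FS 1 +
      (U - L) * ∑ k ∈ Finset.Icc 2 t,
        (if FS (k - 1) < FS k then FS (k - 1) - FS k else 0) / FS 1 ≤ Δ) ∧
    (Δ ≤ RFt / FS 1 + U * (FS 1 - FS t) / FS 1 +
      (L - U) * ∑ k ∈ Finset.Icc 2 t,
        (if FS (k - 1) < FS k then FS (k - 1) - FS k else 0) / FS 1) :=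
  stmt_11_general FS hFS1 L U t ht δ RFt Δ hδ hid
end

section
/- With the setup of the tighter T-period bounds (FS₁ > 0, L ≤ 0 ≤ U, FS₁·Δ = RF_t + Σ_{k=2}^t ρ_k·δ_k, each δ_k ∈ [L,U], ρ_k = FS_{k-1} - FS_k), assuming q₀ ≥ 0, q₁ ≥ 0, q₀ - q₁ = FS₁ - FS_t, and -Σ_{k=2}^t [ρ_k<0]·ρ_k ≤ q₁, the tighter lower bound RF_t/FS₁ + L·(FS₁-FS_t)/FS₁ + (U-L)·Σ_{k=2}^t [ρ_k < 0]·ρ_k/FS₁ is greater than or equal to the general lower bound RF_t/FS₁ + q₀·L/FS₁ - q₁·U/FS₁. -/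
theorem stmt_12 (FS : ℕ → ℝ) (hFS1 : 0 < FS 1) (L U : ℝ) (hL : L ≤ 0) (hU : 0 ≤ U)
    (t : ℕ) (ht : 2 ≤ t) (δ : ℕ → ℝ) (RFt Δ q0 q1 : ℝ)
    (hδ : ∀ k ∈ Finset.Icc 2 t, L ≤ δ k ∧ δ k ≤ U)
    (hid : FS 1 * Δ = RFt + ∑ k ∈ Finset.Icc 2 t, (FS (k - 1) - FS k) * δ k)
    (hq0 : 0 ≤ q0) (hq1 : 0 ≤ q1)
    (hdiff : q0 - q1 = FS 1 - FS t)
    (hneg : -∑ k ∈ Finset.Icc 2 t,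
        (if FS (k - 1) - FS k < 0 then FS (k - 1) - FS k else 0) ≤ q1) :
    RFt / FS 1 + q0 * L / FS 1 - q1 * U / FS 1 ≤
      RFt / FS 1 + L * (FS 1 - FS t) / FS 1 +
        (U - L) * (∑ k ∈ Finset.Icc 2 t,
          (if FS (k - 1) - FS k < 0 then FS (k - 1) - FS k else 0)) / FS 1 := by
  set S := ∑ k ∈ Finset.Icc 2 t,
      (if FS (k - 1) - FS k < 0 then FS (k - 1) - FS k else 0) with hS
  have hUL : 0 ≤ (U - L) * (S + q1) := mul_nonneg (by linarith) (by linarith)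
  have key : RFt + q0 * L - q1 * U ≤ RFt + L * (FS 1 - FS t) + (U - L) * S := by
    nlinarith
  rw [show RFt / FS 1 + q0 * L / FS 1 - q1 * U / FS 1
        = (RFt + q0 * L - q1 * U) / FS 1 by ring,
      show RFt / FS 1 + L * (FS 1 - FS t) / FS 1 + (U - L) * S / FS 1
        = (RFt + L * (FS 1 - FS t) + (U - L) * S) / FS 1 by ring]
  exact (div_le_div_iff_of_pos_right hFS1).mpr key
end

section
/- Let c > 0 (c = FS₁) and for a fixed t ≥ 2 suppose c·Δ = RF_t + Σ_{k=2}^t Σ_{g∈G⁻_k} P(g)·Δ(g) - Σ_{k=2}^t Σ_{g∈G⁺_k} P(g)·Δ(g) with all P(g) ≥ 0 and each Δ(g) ∈ [L, U] (no sign restriction on L, U, just L ≤ U). Suppose Σ_{neg} P(g) ∈ [max{c - f, 0}, q₀] and Σ_{pos} P(g) ∈ [max{f - c, 0}, q₁] where f = FS_t and Σ_neg P(g) - Σ_pos P(g) = c - f. Then Δ ≥ RF_t/c + ([L<0]·q₀ + [L≥0]·max{c-f,0})·L/c - ([U≥0]·q₁ + [U<0]·max{f-c,0})·U/c. -/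
/-! Bound the weighted sum over the negative groups below by (its mass) · L and the one over the
positive groups above by (its mass) · U; then replace each mass by the end of its admissible
interval that is worst for the sign of L, resp. U, and divide the identity for c · Δ by c > 0. -/

section WeightedSums

variable {α β R : Type*} [Semiring R] [PartialOrder R] [IsOrderedRing R]

theorem Finset.sum_sum_mul_le_sum_sum_mul {s : Finset α} {G : α → Finset β} {w x : β → R}
    {b : R} (hw : ∀ k ∈ s, ∀ g ∈ G k, 0 ≤ w g) (hx : ∀ k ∈ s, ∀ g ∈ G k, b ≤ x g) :
    (∑ k ∈ s, ∑ g ∈ G k, w g) * b ≤ ∑ k ∈ s, ∑ g ∈ G k, w g * x g := by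
  simp only [Finset.sum_mul]
  exact Finset.sum_le_sum fun k hk => Finset.sum_le_sum fun g hg =>
    mul_le_mul_of_nonneg_left (hx k hk g hg) (hw k hk g hg)

theorem Finset.sum_sum_mul_le_sum_sum_mul' {s : Finset α} {G : α → Finset β} {w x : β → R}
    {b : R} (hw : ∀ k ∈ s, ∀ g ∈ G k, 0 ≤ w g) (hx : ∀ k ∈ s, ∀ g ∈ G k, x g ≤ b) :
    ∑ k ∈ s, ∑ g ∈ G k, w g * x g ≤ (∑ k ∈ s, ∑ g ∈ G k, w g) * b := by
  simp only [Finset.sum_mul]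
  exact Finset.sum_le_sum fun k hk => Finset.sum_le_sum fun g hg =>
    mul_le_mul_of_nonneg_left (hx k hk g hg) (hw k hk g hg)

end WeightedSums

section WorstCaseMass

variable {R : Type*} [Ring R] [LinearOrder R] [IsStrictOrderedRing R] {lo hi m b : R}

theorem ite_mul_le_mul_of_mem_Icc (hm : m ∈ Set.Icc lo hi) :
    (if b < 0 then hi else lo) * b ≤ m * b := by
  split_ifs with hb
  · exact mul_le_mul_of_nonpos_right hm.2 hb.le
  · exact mul_le_mul_of_nonneg_right hm.1 (not_lt.1 hb)

theorem mul_le_ite_mul_of_mem_Icc (hm : m ∈ Set.Icc lo hi) :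
    m * b ≤ (if 0 ≤ b then hi else lo) * b := by
  split_ifs with hb
  · exact mul_le_mul_of_nonneg_right hm.2 hb
  · exact mul_le_mul_of_nonpos_right hm.1 (not_le.1 hb).le

end WorstCaseMass

theorem stmt_16_general {ι : Type} (t : ℕ)
    (Gneg Gpos : ℕ → Finset ι) (P Δg : ι → ℝ)
    (c f RFt Δ L U q0 q1 : ℝ)
    (hc : 0 < c)
    (hPneg : ∀ k ∈ Finset.Icc 2 t, ∀ g ∈ Gneg k, 0 ≤ P g)
    (hPpos : ∀ k ∈ Finset.Icc 2 t, ∀ g ∈ Gpos k, 0 ≤ P g)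
    (hΔneg : ∀ k ∈ Finset.Icc 2 t, ∀ g ∈ Gneg k, L ≤ Δg g ∧ Δg g ≤ U)
    (hΔpos : ∀ k ∈ Finset.Icc 2 t, ∀ g ∈ Gpos k, L ≤ Δg g ∧ Δg g ≤ U)
    (hneglb : max (c - f) 0 ≤ ∑ k ∈ Finset.Icc 2 t, ∑ g ∈ Gneg k, P g)
    (hnegub : ∑ k ∈ Finset.Icc 2 t, ∑ g ∈ Gneg k, P g ≤ q0)
    (hposlb : max (f - c) 0 ≤ ∑ k ∈ Finset.Icc 2 t, ∑ g ∈ Gpos k, P g)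
    (hposub : ∑ k ∈ Finset.Icc 2 t, ∑ g ∈ Gpos k, P g ≤ q1)
    (hid : c * Δ = RFt +
      ∑ k ∈ Finset.Icc 2 t, ∑ g ∈ Gneg k, P g * Δg g -
      ∑ k ∈ Finset.Icc 2 t, ∑ g ∈ Gpos k, P g * Δg g) :
    RFt / c + ((if L < 0 then q0 else max (c - f) 0) * L) / c -
      ((if 0 ≤ U then q1 else max (f - c) 0) * U) / c ≤ Δ := by
  have hneg := Finset.sum_sum_mul_le_sum_sum_mul hPneg fun k hk g hg => (hΔneg k hk g hg).1
  have hpos := Finset.sum_sum_mul_le_sum_sum_mul' hPpos fun k hk g hg => (hΔpos k hk g hg).2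
  have hnegMass := ite_mul_le_mul_of_mem_Icc (b := L) ⟨hneglb, hnegub⟩
  have hposMass := mul_le_ite_mul_of_mem_Icc (b := U) ⟨hposlb, hposub⟩
  rw [← add_div, ← sub_div, div_le_iff₀ hc]
  linarith

theorem stmt_16 {ι : Type} (t : ℕ) (ht : 2 ≤ t)
    (Gneg Gpos : ℕ → Finset ι) (P Δg : ι → ℝ)
    (c f RFt Δ L U q0 q1 : ℝ)
    (hc : 0 < c) (hLU : L ≤ U)
    (hPneg : ∀ k ∈ Finset.Icc 2 t, ∀ g ∈ Gneg k, 0 ≤ P g)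
    (hPpos : ∀ k ∈ Finset.Icc 2 t, ∀ g ∈ Gpos k, 0 ≤ P g)
    (hΔneg : ∀ k ∈ Finset.Icc 2 t, ∀ g ∈ Gneg k, L ≤ Δg g ∧ Δg g ≤ U)
    (hΔpos : ∀ k ∈ Finset.Icc 2 t, ∀ g ∈ Gpos k, L ≤ Δg g ∧ Δg g ≤ U)
    (hneglb : max (c - f) 0 ≤ ∑ k ∈ Finset.Icc 2 t, ∑ g ∈ Gneg k, P g)
    (hnegub : ∑ k ∈ Finset.Icc 2 t, ∑ g ∈ Gneg k, P g ≤ q0)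
    (hposlb : max (f - c) 0 ≤ ∑ k ∈ Finset.Icc 2 t, ∑ g ∈ Gpos k, P g)
    (hposub : ∑ k ∈ Finset.Icc 2 t, ∑ g ∈ Gpos k, P g ≤ q1)
    (hbal : (∑ k ∈ Finset.Icc 2 t, ∑ g ∈ Gneg k, P g) -
            (∑ k ∈ Finset.Icc 2 t, ∑ g ∈ Gpos k, P g) = c - f)
    (hid : c * Δ = RFt +
      ∑ k ∈ Finset.Icc 2 t, ∑ g ∈ Gneg k, P g * Δg g -
      ∑ k ∈ Finset.Icc 2 t, ∑ g ∈ Gpos k, P g * Δg g) :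
    RFt / c + ((if L < 0 then q0 else max (c - f) 0) * L) / c -
      ((if 0 ≤ U then q1 else max (f - c) 0) * U) / c ≤ Δ :=
  stmt_16_general t Gneg Gpos P Δg c f RFt Δ L U q0 q1 hc hPneg hPpos hΔneg hΔpos hneglb hnegub
    hposlb hposub hid
end
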